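/- arXiv:2509.19177 — 3 statements merged into one kernel-verified Lean document; each statement's English description precedes it below -/
import Mathlib

section
/- (Lower bound for the squared cosine along the segment.) Let λ ∈ (0,1) and let x, u ∈ ℝ^d with |x| > 1, u ≠ 0 and |u| ≤ |x|^λ, and let θ ∈ [0,1]. Then x + θu ≠ 0 and ((u·(x+θu))/(|u|·|x+θu|))² ≥ ((x·u)/(|x|·|u|))²/(1+|x|^{λ−1})² − 2|x|^{λ−1}/(1−|x|^{λ−1})². -/
open MeasureTheory Filter
open scoped InnerProductSpace

noncomputable section

/-- `ℝ^d`, the `d`-dimensional Euclidean space. -/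
abbrev Euc (d : ℕ) := EuclideanSpace ℝ (Fin d)

set_option maxHeartbeats 1600000 in
/-- lower bound for the squared cosine along the segment.
For `λ ∈ (0,1)`, `|x| > 1`, `u ≠ 0`, `|u| ≤ |x|^λ` and `θ ∈ [0,1]`, one has
`x + θu ≠ 0` and
`((u·(x+θu))/(|u||x+θu|))² ≥ ((x·u)/(|x||u|))²/(1+|x|^{λ−1})² − 2|x|^{λ−1}/(1−|x|^{λ−1})²`. -/
theorem statement7
    (d : ℕ) (hd : 1 ≤ d) (lam : ℝ) (hlam : lam ∈ Set.Ioo (0 : ℝ) 1)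
    (x u : Euc d) (hx : 1 < ‖x‖) (hu : u ≠ 0) (hu' : ‖u‖ ≤ ‖x‖ ^ lam)
    (θ : ℝ) (hθ : θ ∈ Set.Icc (0 : ℝ) 1) :
    x + θ • u ≠ 0 ∧
    (⟪x, u⟫_ℝ / (‖x‖ * ‖u‖)) ^ 2 / (1 + ‖x‖ ^ (lam - 1)) ^ 2
        - 2 * ‖x‖ ^ (lam - 1) / (1 - ‖x‖ ^ (lam - 1)) ^ 2
      ≤ (⟪u, x + θ • u⟫_ℝ / (‖u‖ * ‖x + θ • u‖)) ^ 2 := by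
  obtain ⟨hθ0, hθ1⟩ := hθ
  obtain ⟨hlam0, hlam1⟩ := hlam
  have ha0 : (0:ℝ) < ‖x‖ := by linarith
  have hε0 : 0 < ‖x‖ ^ (lam - 1) := Real.rpow_pos_of_pos ha0 _
  have hε1 : ‖x‖ ^ (lam - 1) < 1 := Real.rpow_lt_one_of_one_lt_of_neg hx (by linarith)
  have hb0 : (0:ℝ) < ‖u‖ := norm_pos_iff.mpr hu
  have hba : ‖u‖ ≤ ‖x‖ ^ (lam - 1) * ‖x‖ := by
    refine hu'.trans (le_of_eq ?_)
    calc ‖x‖ ^ lam = ‖x‖ ^ (lam - 1 + 1) := by ring_nf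
    _ = ‖x‖ ^ (lam - 1) * ‖x‖ ^ (1:ℝ) := Real.rpow_add ha0 _ _
    _ = ‖x‖ ^ (lam - 1) * ‖x‖ := by rw [Real.rpow_one]
  have hθu : ‖θ • u‖ = θ * ‖u‖ := by
    rw [norm_smul, Real.norm_eq_abs, abs_of_nonneg hθ0]
  have ht_ub : ‖x + θ • u‖ ≤ ‖x‖ * (1 + ‖x‖ ^ (lam - 1)) := by
    calc ‖x + θ • u‖ ≤ ‖x‖ + ‖θ • u‖ := norm_add_le _ _
    _ = ‖x‖ + θ * ‖u‖ := by rw [hθu]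
    _ ≤ ‖x‖ * (1 + ‖x‖ ^ (lam - 1)) := by nlinarith
  have ht_lb : ‖x‖ * (1 - ‖x‖ ^ (lam - 1)) ≤ ‖x + θ • u‖ := by
    have h1 : ‖x‖ ≤ ‖x + θ • u‖ + ‖θ • u‖ := by
      calc ‖x‖ = ‖(x + θ • u) - θ • u‖ := by rw [add_sub_cancel_right]
      _ ≤ ‖x + θ • u‖ + ‖θ • u‖ := norm_sub_le _ _
    rw [hθu] at h1
    nlinarith
  have ht0 : 0 < ‖x + θ • u‖ := by nlinarith
  have hne : x + θ • u ≠ 0 := by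
    intro h
    rw [h, norm_zero] at ht0
    exact lt_irrefl 0 ht0
  refine ⟨hne, ?_⟩
  have hinner : ⟪u, x + θ • u⟫_ℝ = ⟪x, u⟫_ℝ + θ * ‖u‖ ^ 2 := by
    rw [inner_add_right, inner_smul_right, real_inner_self_eq_norm_sq,
      real_inner_comm]
  rw [hinner]
  have hCS : |⟪x, u⟫_ℝ| ≤ ‖x‖ * ‖u‖ := abs_real_inner_le_norm x u
  obtain ⟨hp_lb, hp_ub⟩ := abs_le.mp hCS
  -- abstract everything into real variables
  generalize ha_def : ‖x‖ = a at *
  generalize hb_def : ‖u‖ = b at *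
  generalize ht_def : ‖x + θ • u‖ = t at *
  generalize hp_def : ⟪x, u⟫_ℝ = p at *
  generalize he_def : a ^ (lam - 1) = ε at *
  have hbt0 : (0:ℝ) < b ^ 2 * t ^ 2 := by positivity
  have hA : (p / (a * b)) ^ 2 / (1 + ε) ^ 2 ≤ p ^ 2 / (b ^ 2 * t ^ 2) := by
    have h1 : (p / (a * b)) ^ 2 / (1 + ε) ^ 2 = p ^ 2 / (a ^ 2 * b ^ 2 * (1 + ε) ^ 2) := by
      rw [div_pow, div_div]
      congr 1
      ring
    rw [h1]
    apply div_le_div_of_nonneg_left (sq_nonneg p) hbt0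
    have h2 : t ^ 2 ≤ a ^ 2 * (1 + ε) ^ 2 := by nlinarith
    nlinarith [mul_le_mul_of_nonneg_left h2 (sq_nonneg b)]
  have hB : 2 * a * b ^ 3 / (b ^ 2 * t ^ 2) ≤ 2 * ε / (1 - ε) ^ 2 := by
    have ha' : a ≠ 0 := ne_of_gt ha0
    have h1ε : (1 - ε) ≠ 0 := ne_of_gt (by linarith)
    have e1 : 2 * a * b ^ 3 / (b ^ 2 * t ^ 2) = 2 * (a * b) / t ^ 2 := by
      field_simp
    have e2 : 2 * ε / (1 - ε) ^ 2 = 2 * (ε * a ^ 2) / (a ^ 2 * (1 - ε) ^ 2) := by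
      field_simp
    have g1 : (0:ℝ) ≤ 2 * (ε * a ^ 2) := by positivity
    have g2 : 2 * (a * b) ≤ 2 * (ε * a ^ 2) := by
      have := mul_le_mul_of_nonneg_left hba ha0.le
      nlinarith [this]
    have g3 : (0:ℝ) < a ^ 2 * (1 - ε) ^ 2 := by
      have : (0:ℝ) < 1 - ε := by linarith
      positivity
    have g4 : a ^ 2 * (1 - ε) ^ 2 ≤ t ^ 2 := by
      have h0 : (0:ℝ) ≤ a * (1 - ε) := by nlinarith
      have := mul_le_mul ht_lb ht_lb h0 ht0.le
      nlinarith [this]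
    rw [e1, e2]
    exact div_le_div₀ g1 g2 g3 g4
  have hC : (p ^ 2 - 2 * a * b ^ 3) / (b ^ 2 * t ^ 2) ≤ ((p + θ * b ^ 2) / (b * t)) ^ 2 := by
    have h1 : ((p + θ * b ^ 2) / (b * t)) ^ 2 = (p + θ * b ^ 2) ^ 2 / (b ^ 2 * t ^ 2) := by
      rw [div_pow, mul_pow]
    rw [h1, div_le_div_iff₀ hbt0 hbt0]
    have hnum : p ^ 2 - 2 * a * b ^ 3 ≤ (p + θ * b ^ 2) ^ 2 := by
      nlinarith [mul_le_mul_of_nonneg_left hp_lb (mul_nonneg hθ0 (sq_nonneg b)),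
        mul_nonneg (sub_nonneg.mpr hθ1) (mul_nonneg ha0.le (pow_nonneg hb0.le 3)),
        sq_nonneg (θ * b ^ 2)]
    nlinarith [hnum, hbt0]
  have hsub : p ^ 2 / (b ^ 2 * t ^ 2) - 2 * a * b ^ 3 / (b ^ 2 * t ^ 2)
      = (p ^ 2 - 2 * a * b ^ 3) / (b ^ 2 * t ^ 2) := (sub_div _ _ _).symm
  linarith
end
end

section
/- (Pointwise medium-jump inequality.) Let p ∈ (0,1) and let x, u ∈ ℝ^d with x ≠ 0 and |u| ≤ |x|. Then |x+u|^p − |x|^p − p·|x|^{p−2}·(x·u) ≤ (p/2)·|x|^{p−1}·|u|. -/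
open MeasureTheory Filter
open scoped InnerProductSpace

noncomputable section

/-- pointwise medium-jump inequality.
For `p ∈ (0,1)`, `x ≠ 0` and `|u| ≤ |x|`:
`|x+u|^p − |x|^p − p|x|^{p−2}(x·u) ≤ (p/2)|x|^{p−1}|u|`. -/
theorem statement10
    (d : ℕ) (hd : 1 ≤ d) (p : ℝ) (hp : p ∈ Set.Ioo (0 : ℝ) 1)
    (x u : Euc d) (hx : x ≠ 0) (hu : ‖u‖ ≤ ‖x‖) :
    ‖x + u‖ ^ p - ‖x‖ ^ p - p * ‖x‖ ^ (p - 2) * ⟪x, u⟫_ℝ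
      ≤ p / 2 * ‖x‖ ^ (p - 1) * ‖u‖ := by
  set a := ‖x + u‖ with ha
  set b := ‖x‖ with hb
  have hb0 : 0 < b := norm_pos_iff.mpr hx
  have ha0 : 0 ≤ a := norm_nonneg _
  -- Bernoulli / concavity: a^p ≤ b^p + p * b^(p-1) * (a - b)
  have hs : (-1 : ℝ) ≤ a / b - 1 := by
    have : 0 ≤ a / b := div_nonneg ha0 hb0.le
    linarith
  have hber := rpow_one_add_le_one_add_mul_self hs hp.1.le hp.2.le
  have hab : (1 : ℝ) + (a / b - 1) = a / b := by ring
  rw [hab] at hber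
  have hdiv : (a / b) ^ p = a ^ p / b ^ p := Real.div_rpow ha0 hb0.le p
  have hbp : (0 : ℝ) < b ^ p := Real.rpow_pos_of_pos hb0 p
  have hconc : a ^ p ≤ b ^ p + p * b ^ (p - 1) * (a - b) := by
    have h1 : a ^ p / b ^ p ≤ 1 + p * (a / b - 1) := hdiv ▸ hber
    have h2 : a ^ p ≤ (1 + p * (a / b - 1)) * b ^ p := by
      rw [← div_le_iff₀ hbp]; exact h1
    calc a ^ p ≤ (1 + p * (a / b - 1)) * b ^ p := h2
      _ = b ^ p + p * (a / b - 1) * b ^ p := by ring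
      _ = b ^ p + p * b ^ (p - 1) * (a - b) := by
          have : b ^ (p - 1) = b ^ p / b := by
            rw [Real.rpow_sub hb0, Real.rpow_one]
          rw [this]
          field_simp
  -- key quadratic fact
  have hsq : a ^ 2 = b ^ 2 + 2 * ⟪x, u⟫_ℝ + ‖u‖ ^ 2 := by
    simpa [ha, hb] using norm_add_sq_real x u
  have hkey : b * (a - b) - ⟪x, u⟫_ℝ ≤ ‖u‖ ^ 2 / 2 := by
    nlinarith [sq_nonneg (a - b)]
  have hkey2 : b * (a - b) - ⟪x, u⟫_ℝ ≤ b * ‖u‖ / 2 := by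
    nlinarith [norm_nonneg u]
  have hbp2 : (0 : ℝ) < b ^ (p - 2) := Real.rpow_pos_of_pos hb0 _
  have hfac : b ^ (p - 1) = b ^ (p - 2) * b := by
    rw [← Real.rpow_add_one hb0.ne' (p - 2)]; ring_nf
  calc a ^ p - b ^ p - p * b ^ (p - 2) * ⟪x, u⟫_ℝ
      ≤ p * b ^ (p - 1) * (a - b) - p * b ^ (p - 2) * ⟪x, u⟫_ℝ := by linarith
    _ = p * b ^ (p - 2) * (b * (a - b) - ⟪x, u⟫_ℝ) := by rw [hfac]; ring
    _ ≤ p * b ^ (p - 2) * (b * ‖u‖ / 2) := by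
        apply mul_le_mul_of_nonneg_left hkey2 (by have := hp.1; positivity)
    _ = p / 2 * b ^ (p - 1) * ‖u‖ := by rw [hfac]; ring
end
end

section
/- (Estimate of the big-jump part of the generator.) For every x with |x| > 1: ∫_{|x|^λ ≤ |u| < |x|} (V(x+u) − V(x) − ∇V(x)·u) ν(x,du) ≤ (p/2)·|x|^{p−1}·∫_{|x|^λ ≤ |u| < |x|} |u| ν(x,du) = φ^big(x). -/
open MeasureTheory Filter Bornology
open scoped InnerProductSpace

noncomputable section

variable {d : ℕ}

/-- The generator `ℒV(x) = ∇V(x)·ℓ(x) + ∫ (V(x+u) − V(x) − ∇V(x)·u 1_{|u|<1}) ν(x,du)`. -/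
noncomputable def genL (V : Euc d → ℝ) (l : Euc d → Euc d)
    (ν : Euc d → Measure (Euc d)) (x : Euc d) : ℝ :=
  ⟪gradient V x, l x⟫_ℝ +
    ∫ u, (V (x + u) - V x - if ‖u‖ < 1 then ⟪gradient V x, u⟫_ℝ else 0) ∂(ν x)

/-- The drift part `ℒ^drift V(x) = ∇V(x)·(ℓ(x) + ∫_{1<|u|<|x|} u ν(x,du))`. -/
noncomputable def genLdrift (V : Euc d → ℝ) (l : Euc d → Euc d)
    (ν : Euc d → Measure (Euc d)) (x : Euc d) : ℝ :=
  ⟪gradient V x, l x + ∫ u in {u : Euc d | 1 < ‖u‖ ∧ ‖u‖ < ‖x‖}, u ∂(ν x)⟫_ℝ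

/-- `φ^drift(x) = |x|^{p−1} max(|ℓ(x)|, ∫_{1<|u|<|x|} |u| ν(x,du))`. -/
noncomputable def phiDrift (p : ℝ) (l : Euc d → Euc d)
    (ν : Euc d → Measure (Euc d)) (x : Euc d) : ℝ :=
  ‖x‖ ^ (p - 1) * max ‖l x‖ (∫ u in {u : Euc d | 1 < ‖u‖ ∧ ‖u‖ < ‖x‖}, ‖u‖ ∂(ν x))

/-- `φ^ball₊(x) = |x|^{p−2} ∫_{|u|<|x|^λ} |u|² ν(x,du)`. -/
noncomputable def phiBallPlus (p lam : ℝ)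
    (ν : Euc d → Measure (Euc d)) (x : Euc d) : ℝ :=
  ‖x‖ ^ (p - 2) * ∫ u in {u : Euc d | ‖u‖ < ‖x‖ ^ lam}, ‖u‖ ^ 2 ∂(ν x)

/-- `φ^ball₋(x) = |x|^{p−2} ∫_{|u|<|x|^λ} |u|² γ_{x,u}² ν(x,du)`, with
`γ_{x,u} = (x·u)/(|x||u|)`. -/
noncomputable def phiBallMinus (p lam : ℝ)
    (ν : Euc d → Measure (Euc d)) (x : Euc d) : ℝ :=
  ‖x‖ ^ (p - 2) * ∫ u in {u : Euc d | ‖u‖ < ‖x‖ ^ lam},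
      ‖u‖ ^ 2 * (⟪x, u⟫_ℝ / (‖x‖ * ‖u‖)) ^ 2 ∂(ν x)

/-- `φ^big(x) = (p/2)|x|^{p−1} ∫_{|x|^λ≤|u|<|x|} |u| ν(x,du)`. -/
noncomputable def phiBig (p lam : ℝ)
    (ν : Euc d → Measure (Euc d)) (x : Euc d) : ℝ :=
  p / 2 * ‖x‖ ^ (p - 1) * ∫ u in {u : Euc d | ‖x‖ ^ lam ≤ ‖u‖ ∧ ‖u‖ < ‖x‖}, ‖u‖ ∂(ν x)

/-- `φ^large(x) = ∫_{|u|≥|x|} |u|^p ν(x,du)`. -/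
noncomputable def phiLarge (p : ℝ)
    (ν : Euc d → Measure (Euc d)) (x : Euc d) : ℝ :=
  ∫ u in {u : Euc d | ‖x‖ ≤ ‖u‖}, ‖u‖ ^ p ∂(ν x)

/-!
Outside the unit ball `V = 1 + |·|^p`, so `∇V(x) = p|x|^{p-2} x`, and on the annulus it suffices to bound
`|x+u|^p - |x|^p - p|x|^{p-2} x·u` pointwise. Concavity of `t ↦ t^p` bounds the first two terms by
`p|x|^{p-1}(|x+u| - |x|)`, and `2|x|(|x+u| - |x|) ≤ |x+u|^2 - |x|^2 = 2x·u + |u|^2` with `|u|^2 ≤ |x||u|`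
leaves `(p/2)|x|^{p-1}|u|`. The annulus stays away from the origin, so it has finite `ν(x,·)`-mass
and `|u|` is integrable there.
-/

theorem rpow_le_rpow_add_mul_sub {a b p : ℝ} (ha : 0 < a) (hb : 0 ≤ b) (hp₀ : 0 ≤ p)
    (hp₁ : p ≤ 1) : b ^ p ≤ a ^ p + p * a ^ (p - 1) * (b - a) := by
  have h := rpow_one_add_le_one_add_mul_self (s := b / a - 1)
    (by linarith [div_nonneg hb ha.le]) hp₀ hp₁
  rw [add_sub_cancel, Real.div_rpow hb ha.le, div_le_iff₀ (by positivity)] at h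
  calc b ^ p ≤ (1 + p * (b / a - 1)) * a ^ p := h
    _ = a ^ p + p * (a ^ p / a) * (b - a) := by field_simp
    _ = _ := by rw [Real.rpow_sub_one ha.ne']

theorem measure_setOf_le_norm_lt_top {E : Type*} [NormedAddCommGroup E] [MeasurableSpace E]
    [OpensMeasurableSpace E] {μ : Measure E}
    (hμ : ∫⁻ u, ENNReal.ofReal (min 1 (‖u‖ ^ 2)) ∂μ < ⊤) {c : ℝ} (hc : 0 < c) :
    μ {u | c ≤ ‖u‖} < ⊤ := by
  set ε := ENNReal.ofReal (min 1 (c ^ 2))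
  have hε : ε ≠ 0 := by simp [ε, hc.ne']
  calc μ {u | c ≤ ‖u‖} ≤ μ {u | ε ≤ ENNReal.ofReal (min 1 (‖u‖ ^ 2))} := by
        refine measure_mono fun u (hu : c ≤ ‖u‖) ↦ ENNReal.ofReal_le_ofReal ?_
        gcongr
    _ ≤ (∫⁻ u, ENNReal.ofReal (min 1 (‖u‖ ^ 2)) ∂μ) / ε :=
        meas_ge_le_lintegral_div (by fun_prop) hε ENNReal.ofReal_ne_top
    _ < ⊤ := ENNReal.div_lt_top hμ.ne hε

section InnerProductSpace

variable {E : Type*} [NormedAddCommGroup E] [InnerProductSpace ℝ E]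

theorem norm_add_rpow_sub_sub_le {x u : E} (hx : x ≠ 0) (hu : ‖u‖ ≤ ‖x‖) {p : ℝ} (hp₀ : 0 ≤ p)
    (hp₁ : p ≤ 1) :
    ‖x + u‖ ^ p - ‖x‖ ^ p - p * ‖x‖ ^ (p - 2) * ⟪x, u⟫_ℝ ≤ p / 2 * ‖x‖ ^ (p - 1) * ‖u‖ := by
  have ha : 0 < ‖x‖ := norm_pos_iff.2 hx
  have htangent := rpow_le_rpow_add_mul_sub ha (norm_nonneg (x + u)) hp₀ hp₁
  have hsecant : ‖x‖ * (‖x + u‖ - ‖x‖) ≤ ⟪x, u⟫_ℝ + ‖u‖ ^ 2 / 2 := by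
    nlinarith [norm_add_sq_real x u, sq_nonneg (‖x + u‖ - ‖x‖)]
  have hsq : ‖u‖ ^ 2 ≤ ‖x‖ * ‖u‖ := by nlinarith [norm_nonneg u]
  have hpow : ‖x‖ ^ (p - 1) = ‖x‖ ^ (p - 2) * ‖x‖ := by
    rw [← Real.rpow_add_one ha.ne']; ring_nf
  rw [hpow] at htangent
  calc ‖x + u‖ ^ p - ‖x‖ ^ p - p * ‖x‖ ^ (p - 2) * ⟪x, u⟫_ℝ
      ≤ p * ‖x‖ ^ (p - 2) * (‖x‖ * (‖x + u‖ - ‖x‖) - ⟪x, u⟫_ℝ) := by linarith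
    _ ≤ p * ‖x‖ ^ (p - 2) * (‖x‖ * ‖u‖ / 2) := by gcongr; linarith
    _ = p / 2 * ‖x‖ ^ (p - 1) * ‖u‖ := by rw [hpow]; ring

variable [CompleteSpace E]

theorem hasGradientAt_norm_rpow_of_ne_zero {x : E} (hx : x ≠ 0) (p : ℝ) :
    HasGradientAt (fun y : E ↦ ‖y‖ ^ p) ((p * ‖x‖ ^ (p - 2)) • x) x := by
  rw [hasGradientAt_iff_hasFDerivAt]
  convert! ((hasStrictFDerivAt_norm_sq x).rpow_const (p := p / 2) (by simp [hx])).hasFDerivAt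
    using 1
  · ext y; rw [← Real.rpow_natCast_mul (norm_nonneg _)]; ring_nf
  · ext y
    simp [← Real.rpow_natCast_mul (norm_nonneg _)]
    ring_nf

theorem gradient_eq_of_eventuallyEq_add_norm_rpow {V : E → ℝ} {x : E} (hx : x ≠ 0) {c p : ℝ}
    (hV : V =ᶠ[nhds x] fun y ↦ c + ‖y‖ ^ p) : gradient V x = (p * ‖x‖ ^ (p - 2)) • x := by
  rw [hV.gradient_eq]
  exact (hasGradientAt_iff_hasFDerivAt.2
    ((hasGradientAt_norm_rpow_of_ne_zero hx p).hasFDerivAt.const_add c)).gradient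

theorem sub_sub_inner_gradient_le {V : E → ℝ} {x u : E} (hx : x ≠ 0) (hu : ‖u‖ ≤ ‖x‖) {c p : ℝ}
    (hp₀ : 0 ≤ p) (hp₁ : p ≤ 1) (hVx : V =ᶠ[nhds x] fun y ↦ c + ‖y‖ ^ p)
    (hVle : ∀ y, V y ≤ c + ‖y‖ ^ p) :
    V (x + u) - V x - ⟪gradient V x, u⟫_ℝ ≤ p / 2 * ‖x‖ ^ (p - 1) * ‖u‖ := by
  have hVx' : V x = c + ‖x‖ ^ p := hVx.eq_of_nhds
  rw [gradient_eq_of_eventuallyEq_add_norm_rpow hx hVx, real_inner_smul_left, hVx']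
  linarith [hVle (x + u), norm_add_rpow_sub_sub_le hx hu hp₀ hp₁]

end InnerProductSpace

theorem statement11_general
    (d : ℕ) (p lam : ℝ)
    (hp : p ∈ Set.Ioo (0 : ℝ) 1)
    (V : Euc d → ℝ) (ν : Euc d → Measure (Euc d))
    (hVeq : ∀ x : Euc d, 1 < ‖x‖ → V x = 1 + ‖x‖ ^ p)
    (hVle : ∀ x : Euc d, V x ≤ 1 + ‖x‖ ^ p)
    (hνsq : ∀ x : Euc d, ∫⁻ u, ENNReal.ofReal (min 1 (‖u‖ ^ 2)) ∂(ν x) < ⊤)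
    (hIntAnn : ∀ x : Euc d, 1 < ‖x‖ →
      IntegrableOn (fun u => V (x + u) - V x - ⟪gradient V x, u⟫_ℝ)
        {u : Euc d | ‖x‖ ^ lam ≤ ‖u‖ ∧ ‖u‖ < ‖x‖} (ν x))
    (x : Euc d) (hx : 1 < ‖x‖) :
    (∫ u in {u : Euc d | ‖x‖ ^ lam ≤ ‖u‖ ∧ ‖u‖ < ‖x‖},
        (V (x + u) - V x - ⟪gradient V x, u⟫_ℝ) ∂(ν x))
      ≤ p / 2 * ‖x‖ ^ (p - 1)
          * ∫ u in {u : Euc d | ‖x‖ ^ lam ≤ ‖u‖ ∧ ‖u‖ < ‖x‖}, ‖u‖ ∂(ν x) ∧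
    p / 2 * ‖x‖ ^ (p - 1)
        * (∫ u in {u : Euc d | ‖x‖ ^ lam ≤ ‖u‖ ∧ ‖u‖ < ‖x‖}, ‖u‖ ∂(ν x))
      = phiBig p lam ν x := by
  obtain ⟨hp₀, hp₁⟩ := hp
  have hx₀ : x ≠ 0 := norm_pos_iff.1 (one_pos.trans hx)
  have hVx : V =ᶠ[nhds x] fun y ↦ 1 + ‖y‖ ^ p :=
    eventually_of_mem ((isOpen_lt continuous_const continuous_norm).mem_nhds hx) hVeq
  set S := {u : Euc d | ‖x‖ ^ lam ≤ ‖u‖ ∧ ‖u‖ < ‖x‖}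
  have hS : MeasurableSet S :=
    (measurableSet_le measurable_const measurable_norm).inter
      (measurableSet_lt measurable_norm measurable_const)
  have hSfin : ν x S < ⊤ := (measure_mono fun u hu ↦ hu.1).trans_lt
    (measure_setOf_le_norm_lt_top (hνsq x) (by positivity))
  have hnorm : IntegrableOn (fun u ↦ ‖u‖) S (ν x) :=
    Measure.integrableOn_of_bounded hSfin.ne measurable_norm.aestronglyMeasurable (M := ‖x‖)
      ((ae_restrict_iff' hS).2 (ae_of_all _ fun u hu ↦ by simpa using hu.2.le))
  refine ⟨?_, rfl⟩
  calc ∫ u in S, (V (x + u) - V x - ⟪gradient V x, u⟫_ℝ) ∂(ν x)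
      ≤ ∫ u in S, p / 2 * ‖x‖ ^ (p - 1) * ‖u‖ ∂(ν x) :=
        setIntegral_mono_on (hIntAnn x hx) (hnorm.const_mul _) hS fun u hu ↦
          sub_sub_inner_gradient_le hx₀ hu.2.le hp₀.le hp₁.le hVx hVle
    _ = p / 2 * ‖x‖ ^ (p - 1) * ∫ u in S, ‖u‖ ∂(ν x) := integral_const_mul _ _

/-- estimate of the big-jump part of the generator.
For every `|x| > 1`:
`∫_{|x|^λ ≤ |u| < |x|} (V(x+u) − V(x) − ∇V(x)·u) ν(x,du)
  ≤ (p/2)|x|^{p−1} ∫_{|x|^λ ≤ |u| < |x|} |u| ν(x,du) = φ^big(x)`. -/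
theorem statement11
    (d : ℕ) (hd : 1 ≤ d) (p lam : ℝ)
    (hp : p ∈ Set.Ioo (0 : ℝ) 1) (hlam : lam ∈ Set.Ioo (0 : ℝ) 1)
    (V : Euc d → ℝ) (ν : Euc d → Measure (Euc d))
    (hV : ContDiff ℝ 2 V) (hV1 : ∀ x, 1 ≤ V x)
    (hVeq : ∀ x : Euc d, 1 < ‖x‖ → V x = 1 + ‖x‖ ^ p)
    (hVle : ∀ x : Euc d, V x ≤ 1 + ‖x‖ ^ p)
    (hν0 : ∀ x : Euc d, ν x {0} = 0)
    (hνsq : ∀ x : Euc d, ∫⁻ u, ENNReal.ofReal (min 1 (‖u‖ ^ 2)) ∂(ν x) < ⊤)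
    (hIntAnn : ∀ x : Euc d, 1 < ‖x‖ →
      IntegrableOn (fun u => V (x + u) - V x - ⟪gradient V x, u⟫_ℝ)
        {u : Euc d | ‖x‖ ^ lam ≤ ‖u‖ ∧ ‖u‖ < ‖x‖} (ν x))
    (x : Euc d) (hx : 1 < ‖x‖) :
    (∫ u in {u : Euc d | ‖x‖ ^ lam ≤ ‖u‖ ∧ ‖u‖ < ‖x‖},
        (V (x + u) - V x - ⟪gradient V x, u⟫_ℝ) ∂(ν x))
      ≤ p / 2 * ‖x‖ ^ (p - 1)
          * ∫ u in {u : Euc d | ‖x‖ ^ lam ≤ ‖u‖ ∧ ‖u‖ < ‖x‖}, ‖u‖ ∂(ν x) ∧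
    p / 2 * ‖x‖ ^ (p - 1)
        * (∫ u in {u : Euc d | ‖x‖ ^ lam ≤ ‖u‖ ∧ ‖u‖ < ‖x‖}, ‖u‖ ∂(ν x))
      = phiBig p lam ν x :=
  statement11_general d p lam hp V ν hVeq hVle hνsq hIntAnn x hx
end
end
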